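/- Let G be a strongly linear group. Then every nilpotent normal subgroup of G is contained in the center Z(G); equivalently, the Fitting subgroup of G (the subgroup generated by all nilpotent normal subgroups) equals Z(G). -/

import Mathlib

/-- A monoid is torsion-free if no nontrivial element has finite order
(the definition of `Monoid.IsTorsionFree` in the older Mathlib). -/
def Monoid.IsTorsionFree (G : Type*) [Monoid G] : Prop :=
  ∀ g : G, g ≠ 1 → ¬IsOfFinOrder g

/-- The Zariski closure of a set of `N × N` matrices over `K`: the set of matrices at which
every polynomial in the `N²` matrix entries vanishing identically on `S` also vanishes. -/
def zariskiClosure (N : ℕ) (K : Type) [Field K]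
    (S : Set (Matrix (Fin N) (Fin N) K)) : Set (Matrix (Fin N) (Fin N) K) :=
  {A | ∀ p : MvPolynomial (Fin N × Fin N) K,
    (∀ B ∈ S, MvPolynomial.eval (fun q => B q.1 q.2) p = 0) →
      MvPolynomial.eval (fun q => A q.1 q.2) p = 0}

/-- The Zariski closure of `S` contains `SL_N(K)`. -/
def ContainsSL (N : ℕ) (K : Type) [Field K] (S : Set (Matrix (Fin N) (Fin N) K)) : Prop :=
  ∀ A : Matrix.SpecialLinearGroup (Fin N) K,
    (A : Matrix (Fin N) (Fin N) K) ∈ zariskiClosure N K S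

/-- A torsion-free group `G` is strongly linear if there exist `N ≥ 1`, a field `K`, and an
injective group homomorphism `ι : G → GL_N(K)` such that the Zariski closure of `ι(G)`
contains `SL_N(K)`. -/
def StronglyLinear (G : Type*) [Group G] : Prop :=
  Monoid.IsTorsionFree G ∧
  ∃ (N : ℕ) (K : Type) (_ : Field K)
    (ι : G →* Matrix.GeneralLinearGroup (Fin N) K),
    1 ≤ N ∧ Function.Injective ι ∧
    ContainsSL N K ((fun g : G => ((ι g : Matrix.GeneralLinearGroup (Fin N) K) :
      Matrix (Fin N) (Fin N) K)) '' Set.univ)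

open Matrix MvPolynomial

namespace SLAux

variable {N : ℕ} {K : Type} [Field K]

lemma vmv_mul_vmv (u w u' w' : Fin N → K) :
    vecMulVec u w * vecMulVec u' w' = (w ⬝ᵥ u') • vecMulVec u w' := by
  ext i j
  simp only [mul_apply, vecMulVec_apply, Matrix.smul_apply, smul_eq_mul, dotProduct]
  rw [Finset.sum_mul]
  exact Finset.sum_congr rfl fun k _ => by ring

lemma mul_vmv (X : Matrix (Fin N) (Fin N) K) (u w : Fin N → K) :
    X * vecMulVec u w = vecMulVec (X *ᵥ u) w := by
  ext i j
  simp only [mul_apply, vecMulVec_apply, mulVec, dotProduct]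
  rw [Finset.sum_mul]
  exact Finset.sum_congr rfl fun k _ => by ring

lemma vmv_mul (X : Matrix (Fin N) (Fin N) K) (u w : Fin N → K) :
    vecMulVec u w * X = vecMulVec u (w ᵥ* X) := by
  ext i j
  simp only [mul_apply, vecMulVec_apply, vecMul, dotProduct]
  rw [Finset.mul_sum]
  exact Finset.sum_congr rfl fun k _ => by ring

lemma eigen_of_commE (X : Matrix (Fin N) (Fin N) K) (u w : Fin N → K) (j : Fin N)
    (hj : w j ≠ 0) (hcomm : X * vecMulVec u w = vecMulVec u w * X) :
    ∃ c : K, X *ᵥ u = c • u := by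
  rw [mul_vmv, vmv_mul] at hcomm
  refine ⟨(w ᵥ* X) j / w j, funext fun i => ?_⟩
  have h : vecMulVec (X *ᵥ u) w i j = vecMulVec u (w ᵥ* X) i j := by rw [hcomm]
  rw [vecMulVec_apply, vecMulVec_apply] at h
  have : (X *ᵥ u) i = u i * (w ᵥ* X) j / w j := by
    field_simp
    linear_combination h
  rw [this]
  simp only [Pi.smul_apply, smul_eq_mul]
  ring

lemma perp_smul (u v : Fin N → K) (hu : u ≠ 0)
    (h : ∀ w : Fin N → K, w ⬝ᵥ u = 0 → w ⬝ᵥ v = 0) : ∃ c : K, v = c • u := by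
  obtain ⟨i, hi⟩ : ∃ i, u i ≠ 0 := by
    by_contra hc
    push_neg at hc
    exact hu (funext fun i => hc i)
  refine ⟨v i / u i, funext fun k => ?_⟩
  set w₀ : Fin N → K := u i • (Pi.single k 1 : Fin N → K) - u k • (Pi.single i 1 : Fin N → K) with hw₀
  have hw : w₀ ⬝ᵥ u = 0 := by
    simp [hw₀, sub_dotProduct, smul_dotProduct, dotProduct, Pi.single_apply, sub_mul, ite_mul, zero_mul, Finset.sum_sub_distrib, Finset.sum_ite_eq']
    ring
  have h2 := h _ hw
  simp [hw₀, sub_dotProduct, smul_dotProduct, dotProduct, Pi.single_apply, sub_mul, ite_mul, zero_mul, Finset.sum_sub_distrib, Finset.sum_ite_eq'] at h2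
  simp only [Pi.smul_apply, smul_eq_mul]
  field_simp
  linear_combination h2

lemma scalar_of_eigen (hN : 0 < N) (X : Matrix (Fin N) (Fin N) K)
    (h : ∀ u : Fin N → K, ∃ c : K, X *ᵥ u = c • u) : ∃ c : K, X = c • 1 := by
  choose c hc using h
  have hcol : ∀ i j : Fin N, X i j = c (Pi.single j 1) * ((Pi.single j 1 : Fin N → K) i) := by
    intro i j
    have h1 := congrFun (hc (Pi.single j 1 : _)) i
    rw [mulVec_single] at h1
    simpa using h1
  have hoff : ∀ i j : Fin N, i ≠ j → X i j = 0 := by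
    intro i j hij; rw [hcol i j, Pi.single_eq_of_ne hij, mul_zero]
  have hdiag : ∀ i j : Fin N, X i i = X j j := by
    intro i j
    by_cases hij : i = j
    · rw [hij]
    · set u : Fin N → K := (Pi.single i 1 : Fin N → K) + (Pi.single j 1 : Fin N → K) with hu
      have h1 := congrFun (hc u) i
      have h2 := congrFun (hc u) j
      have hmv : X *ᵥ u = (fun k => X k i) + (fun k => X k j) := by
        rw [hu, mulVec_add]
        congr 1 <;> · funext k; rw [mulVec_single]; simp
      rw [hmv] at h1 h2
      simp only [Pi.add_apply, Pi.smul_apply, smul_eq_mul, hu, Pi.single_apply] at h1 h2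
      rw [hoff i j hij] at h1
      rw [hoff j i (Ne.symm hij)] at h2
      simp [hij, Ne.symm hij] at h1 h2
      rw [h1, h2]
  refine ⟨X ⟨0, hN⟩ ⟨0, hN⟩, ?_⟩
  ext i j
  by_cases hij : i = j
  · subst hij; rw [Matrix.smul_apply, one_apply_eq, smul_eq_mul, mul_one]; exact hdiag i ⟨0, hN⟩
  · rw [hoff i j hij, Matrix.smul_apply, one_apply_ne hij, smul_eq_mul, mul_zero]


lemma smul_vmv (t : K) (u w : Fin N → K) :
    t • vecMulVec u w = vecMulVec (t • u) w := by
  ext i j; simp [vecMulVec_apply, mul_assoc]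

lemma det_transvec (u w : Fin N → K) (t : K) (hw : w ⬝ᵥ u = 0) :
    (1 + t • vecMulVec u w).det = 1 := by
  rw [smul_vmv, vecMulVec_eq (Fin 1), det_one_add_replicateCol_mul_replicateRow, dotProduct_smul]
  simp [hw]

lemma exists_index (u : Fin N → K) (hu : u ≠ 0) : ∃ i, u i ≠ 0 := by
  by_contra hc
  push_neg at hc
  exact hu (funext fun i => hc i)

lemma scalar_of_transvection_comm [Infinite K] (hN : 0 < N) (X : Matrix (Fin N) (Fin N) K)
    (h : ∀ u w : Fin N → K, w ⬝ᵥ u = 0 → ∀ t : K,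
      X * ((1 + t • vecMulVec u w) * X * (1 - t • vecMulVec u w))
        = ((1 + t • vecMulVec u w) * X * (1 - t • vecMulVec u w)) * X) :
    ∃ c : K, X = c • 1 := by
  apply scalar_of_eigen hN
  intro u
  by_cases hu : u = 0
  · exact ⟨0, by simp [hu]⟩
  have key : ∀ w : Fin N → K, w ⬝ᵥ u = 0 →
      (w ⬝ᵥ (X *ᵥ u)) • (X * vecMulVec u w - vecMulVec u w * X) = 0 := by
    intro w hw
    set E := vecMulVec u w with hE
    have hEXE : E * X * E = (w ⬝ᵥ (X *ᵥ u)) • E := by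
      rw [hE, vmv_mul, vmv_mul_vmv, dotProduct_mulVec]
    set D := E * X - X * E with hD
    set F := E * X * E with hF
    set P := X * D - D * X with hP
    set Q := X * F - F * X with hQ
    have hlin : ∀ t' : K,
        X * (X + t' • D - (t' * t') • F) - (X + t' • D - (t' * t') • F) * X
          = t' • P - (t' * t') • Q := by
      intro t'
      rw [hP, hQ]
      simp only [mul_add, add_mul, mul_sub, sub_mul, mul_smul_comm, smul_mul_assoc, smul_sub]
      abel
    have hexp : ∀ t : K, t • P - (t * t) • Q = 0 := by
      intro t
      have h0 := h u w hw t
      have hS : (1 + t • E) * X * (1 - t • E) = X + t • D - (t * t) • F := by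
        rw [hD, hF]
        simp only [add_mul, one_mul, mul_sub, mul_one, smul_mul_assoc, mul_smul_comm,
          smul_smul, smul_sub, smul_add]
        abel
      rw [hS] at h0
      rw [← hlin t, sub_eq_zero]
      exact h0
    have hPQ : P = Q := by
      have e1 := hexp 1
      rw [one_smul, one_mul, one_smul, sub_eq_zero] at e1
      exact e1
    haveI := Classical.decEq K
    obtain ⟨t0, ht0⟩ := Infinite.exists_notMem_finset ({0, 1} : Finset K)
    simp only [Finset.mem_insert, Finset.mem_singleton, not_or] at ht0
    obtain ⟨ht00, ht01⟩ := ht0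
    have e2 := hexp t0
    rw [← hPQ, ← sub_smul] at e2
    have hne : t0 - t0 * t0 ≠ 0 := by
      have : t0 - t0 * t0 = t0 * (1 - t0) := by ring
      rw [this]
      exact mul_ne_zero ht00 (sub_ne_zero.mpr (Ne.symm ht01))
    have hP0 : P = 0 := (smul_eq_zero.mp e2).resolve_left hne
    have hQ0 : Q = 0 := by rw [← hPQ, hP0]
    have hQc : Q = (w ⬝ᵥ (X *ᵥ u)) • (X * E - E * X) := by
      rw [hQ, hEXE, mul_smul_comm, smul_mul_assoc, smul_sub]
    rw [← hQc]
    exact hQ0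
  by_cases hall : ∀ w : Fin N → K, w ⬝ᵥ u = 0 → w ⬝ᵥ (X *ᵥ u) = 0
  · exact perp_smul u (X *ᵥ u) hu hall
  · push_neg at hall
    obtain ⟨w, hw, hwX⟩ := hall
    have hk := key w hw
    have hcomm : X * vecMulVec u w - vecMulVec u w * X = 0 :=
      (smul_eq_zero.mp hk).resolve_left hwX
    obtain ⟨j, hj⟩ : ∃ j, w j ≠ 0 := by
      apply exists_index
      intro hw0
      rw [hw0, zero_dotProduct] at hwX
      exact hwX rfl
    exact eigen_of_commE X u w j hj (sub_eq_zero.mp hcomm)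

lemma scalar_of_comm_all_vmv (hN : 0 < N) (X : Matrix (Fin N) (Fin N) K)
    (h : ∀ u w : Fin N → K, w ⬝ᵥ u = 0 → X * vecMulVec u w = vecMulVec u w * X) :
    ∃ c : K, X = c • 1 := by
  rcases Nat.lt_or_ge N 2 with h2 | h2
  · have hN1 : N = 1 := by omega
    subst hN1
    refine ⟨X 0 0, ?_⟩
    ext i j
    fin_cases i <;> fin_cases j <;> simp [one_apply]
  · apply scalar_of_eigen hN
    intro u
    by_cases hu : u = 0
    · exact ⟨0, by simp [hu]⟩
    obtain ⟨i, hi⟩ := exists_index u hu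
    obtain ⟨k, hk⟩ : ∃ k : Fin N, k ≠ i := by
      by_cases hi0 : i = ⟨0, by omega⟩
      · exact ⟨⟨1, by omega⟩, by rw [hi0]; intro hc; exact absurd (congrArg Fin.val hc) (by simp)⟩
      · exact ⟨⟨0, by omega⟩, fun hc => hi0 (hc ▸ rfl)⟩
    set w : Fin N → K := u i • (Pi.single k 1 : Fin N → K) - u k • (Pi.single i 1 : Fin N → K)
      with hwdef
    have hw : w ⬝ᵥ u = 0 := by
      simp [hwdef, sub_dotProduct, smul_dotProduct, dotProduct, Pi.single_apply, sub_mul,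
        ite_mul, zero_mul, Finset.sum_sub_distrib, Finset.sum_ite_eq']
      ring
    have hwk : w k ≠ 0 := by
      have : w k = u i := by
        simp [hwdef, Pi.single_eq_of_ne hk]
      rw [this]; exact hi
    exact eigen_of_commE X u w k hwk (h u w hw)

/-- The generic matrix whose entries are the polynomial variables. -/
noncomputable def genM (N : ℕ) (K : Type) [Field K] :
    Matrix (Fin N) (Fin N) (MvPolynomial (Fin N × Fin N) K) :=
  Matrix.of fun i j => MvPolynomial.X (i, j)

lemma map_genM (A : Matrix (Fin N) (Fin N) K) :
    (RingHom.mapMatrix (MvPolynomial.eval fun q : Fin N × Fin N => A q.1 q.2)) (genM N K)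
      = A := by
  ext i j
  simp [genM, RingHom.mapMatrix_apply, Matrix.map_apply]

lemma map_constM (A Y : Matrix (Fin N) (Fin N) K) :
    (RingHom.mapMatrix (MvPolynomial.eval fun q : Fin N × Fin N => A q.1 q.2))
      (Y.map (MvPolynomial.C : K →+* MvPolynomial (Fin N × Fin N) K)) = Y := by
  ext i j
  simp [RingHom.mapMatrix_apply, Matrix.map_apply]

lemma dense_zero {S : Set (Matrix (Fin N) (Fin N) K)} (hSL : ContainsSL N K S)
    (P : Matrix (Fin N) (Fin N) (MvPolynomial (Fin N × Fin N) K))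
    (hP : ∀ B ∈ S,
      (RingHom.mapMatrix (MvPolynomial.eval fun q : Fin N × Fin N => B q.1 q.2)) P = 0) :
    ∀ A : Matrix.SpecialLinearGroup (Fin N) K,
      (RingHom.mapMatrix
        (MvPolynomial.eval fun q : Fin N × Fin N => (A : Matrix (Fin N) (Fin N) K) q.1 q.2)) P
          = 0 := by
  intro A
  ext i j
  have h0 : ∀ B ∈ S, MvPolynomial.eval (fun q : Fin N × Fin N => B q.1 q.2) (P i j) = 0 := by
    intro B hB
    have := congrArg (fun M => M i j) (hP B hB)
    simpa [RingHom.mapMatrix_apply, Matrix.map_apply] using this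
  have := hSL A (P i j) h0
  simpa [RingHom.mapMatrix_apply, Matrix.map_apply] using this

/-- Density for commutation: if `Y` commutes with every element of `S`,
then `Y` commutes with every element of `SL_N`. -/
lemma dense_comm {S : Set (Matrix (Fin N) (Fin N) K)} (hSL : ContainsSL N K S)
    (Y : Matrix (Fin N) (Fin N) K) (hY : ∀ B ∈ S, Y * B = B * Y) :
    ∀ A : Matrix.SpecialLinearGroup (Fin N) K,
      Y * (A : Matrix (Fin N) (Fin N) K) = (A : Matrix (Fin N) (Fin N) K) * Y := by
  set Yc := Y.map (MvPolynomial.C : K →+* MvPolynomial (Fin N × Fin N) K) with hYc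
  set P := Yc * genM N K - genM N K * Yc with hPdef
  have hmap : ∀ A : Matrix (Fin N) (Fin N) K,
      (RingHom.mapMatrix (MvPolynomial.eval fun q : Fin N × Fin N => A q.1 q.2)) P
        = Y * A - A * Y := by
    intro A
    simp only [hPdef, hYc, map_sub, _root_.map_mul, map_genM, map_constM]
  intro A
  have h1 := dense_zero hSL P (fun B hB => by rw [hmap B, hY B hB, sub_self]) A
  rw [hmap] at h1
  exact sub_eq_zero.mp h1

/-- Density for conjugation-commutation. -/
lemma dense_conj_comm {S : Set (Matrix (Fin N) (Fin N) K)} (hSL : ContainsSL N K S)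
    (Y : Matrix (Fin N) (Fin N) K)
    (hY : ∀ B ∈ S, Y * (B * Y * B.adjugate) = (B * Y * B.adjugate) * Y) :
    ∀ A : Matrix.SpecialLinearGroup (Fin N) K,
      Y * ((A : Matrix (Fin N) (Fin N) K) * Y * (A : Matrix (Fin N) (Fin N) K).adjugate)
        = ((A : Matrix (Fin N) (Fin N) K) * Y * (A : Matrix (Fin N) (Fin N) K).adjugate) * Y := by
  set Yc := Y.map (MvPolynomial.C : K →+* MvPolynomial (Fin N × Fin N) K) with hYc
  set P := Yc * (genM N K * Yc * (genM N K).adjugate)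
    - (genM N K * Yc * (genM N K).adjugate) * Yc with hPdef
  have hmap : ∀ A : Matrix (Fin N) (Fin N) K,
      (RingHom.mapMatrix (MvPolynomial.eval fun q : Fin N × Fin N => A q.1 q.2)) P
        = Y * (A * Y * A.adjugate) - (A * Y * A.adjugate) * Y := by
    intro A
    simp only [hPdef, hYc, map_sub, _root_.map_mul, RingHom.map_adjugate, map_genM, map_constM]
  intro A
  have h1 := dense_zero hSL P (fun B hB => by rw [hmap B, hY B hB, sub_self]) A
  rw [hmap] at h1
  exact sub_eq_zero.mp h1

end SLAux

open SLAux commutatorElement in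
theorem stronglyLinear_fitting_eq_center
    (G : Type) [Group G] (hG : StronglyLinear G) :
    (∀ H : Subgroup G, H.Normal → Group.IsNilpotent ↥H → H ≤ Subgroup.center G) ∧
    (⨆ (H : Subgroup G) (_ : H.Normal ∧ Group.IsNilpotent ↥H), H) = Subgroup.center G := by
  obtain ⟨htf, N, K, _, ι, hN, hinj, hSL⟩ := hG
  set m : G → Matrix (Fin N) (Fin N) K :=
    fun g => ((ι g : Matrix.GeneralLinearGroup (Fin N) K) : Matrix (Fin N) (Fin N) K) with hm
  have hminj : Function.Injective m := fun a b h => hinj (Units.ext h)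
  have hmmul : ∀ a b : G, m (a * b) = m a * m b := fun a b => by
    simp only [hm, _root_.map_mul, Units.val_mul]
  have hm1 : m 1 = 1 := by simp only [hm, _root_.map_one, Units.val_one]
  -- scalar image implies central
  have hscalar_center : ∀ (a : G) (c : K), m a = c • 1 → a ∈ Subgroup.center G := by
    intro a c h
    rw [Subgroup.mem_center_iff]
    intro g
    apply hminj
    rw [hmmul, hmmul, h, smul_mul_assoc, mul_smul_comm, one_mul, mul_one]
  -- a nontrivial element forces K infinite
  have hKinf : ∀ a : G, a ≠ 1 → Infinite K := by
    intro a ha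
    rcases finite_or_infinite K with hK | hK
    · exfalso
      haveI : Finite (Matrix (Fin N) (Fin N) K) := inferInstanceAs (Finite (Fin N → Fin N → K))
      obtain ⟨n1, n2, hne, heq⟩ :=
        Finite.exists_ne_map_eq_of_infinite (fun n : ℕ => m (a ^ n))
      have hpow : a ^ n1 = a ^ n2 := hminj heq
      exact hne (injective_pow_iff_not_isOfFinOrder.mpr (htf a ha) hpow)
    · exact hK
  -- central elements have scalar image
  have hcentral_scalar : ∀ z ∈ Subgroup.center G, ∃ c : K, m z = c • 1 := by
    intro z hz
    have hcommS : ∀ B ∈ ((fun g : G => ((ι g : Matrix.GeneralLinearGroup (Fin N) K) :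
        Matrix (Fin N) (Fin N) K)) '' Set.univ), m z * B = B * m z := by
      rintro B ⟨g, -, rfl⟩
      rw [← hmmul, ← hmmul, Subgroup.mem_center_iff.mp hz g]
    have hcommSL := dense_comm hSL (m z) hcommS
    apply scalar_of_comm_all_vmv hN (m z)
    intro u w hw
    have h1 := hcommSL ⟨1 + (1 : K) • vecMulVec u w, det_transvec u w 1 hw⟩
    simp only [one_smul] at h1
    have h1' : m z * (1 + vecMulVec u w) = (1 + vecMulVec u w) * m z := h1
    rw [mul_add, add_mul, mul_one, one_mul] at h1'
    exact add_left_cancel h1'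
  -- an element commuting with all its conjugates is central
  have key2 : ∀ a : G, (∀ g : G, a * (g * a * g⁻¹) = (g * a * g⁻¹) * a) →
      a ∈ Subgroup.center G := by
    intro a hcomm
    by_cases ha1 : a = 1
    · subst ha1; exact (Subgroup.center G).one_mem
    haveI := hKinf a ha1
    have hconjS : ∀ B ∈ ((fun g : G => ((ι g : Matrix.GeneralLinearGroup (Fin N) K) :
        Matrix (Fin N) (Fin N) K)) '' Set.univ),
        m a * (B * m a * B.adjugate) = (B * m a * B.adjugate) * m a := by
      rintro B ⟨g, -, rfl⟩
      have hu : IsUnit (m g).det := by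
        rw [← Matrix.isUnit_iff_isUnit_det]
        exact ⟨ι g, rfl⟩
      have hadj : (m g).adjugate = (m g).det • (m g)⁻¹ := by
        calc (m g).adjugate = ((m g)⁻¹ * m g) * (m g).adjugate := by
              rw [Matrix.nonsing_inv_mul _ hu, one_mul]
          _ = (m g)⁻¹ * ((m g) * (m g).adjugate) := by rw [Matrix.mul_assoc]
          _ = (m g)⁻¹ * ((m g).det • 1) := by rw [Matrix.mul_adjugate]
          _ = (m g).det • (m g)⁻¹ := by rw [mul_smul_comm, mul_one]
      have hinvcoe : m g⁻¹ = (m g)⁻¹ := by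
        rw [hm]; simp only [map_inv]
        exact Matrix.coe_units_inv (ι g)
      have hconj : m g * m a * (m g).adjugate = (m g).det • m (g * a * g⁻¹) := by
        rw [hadj, mul_smul_comm, hmmul, hmmul, hinvcoe]
      rw [hconj, mul_smul_comm, smul_mul_assoc]
      congr 1
      rw [← hmmul, ← hmmul, hcomm g]
    have hconjSL := dense_conj_comm hSL (m a) hconjS
    have htrans : ∀ u w : Fin N → K, w ⬝ᵥ u = 0 → ∀ t : K,
        m a * ((1 + t • vecMulVec u w) * m a * (1 - t • vecMulVec u w))
          = ((1 + t • vecMulVec u w) * m a * (1 - t • vecMulVec u w)) * m a := by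
      intro u w hw t
      have hdet2 : (1 - t • vecMulVec u w).det = 1 := by
        rw [sub_eq_add_neg, ← neg_smul]
        exact det_transvec u w (-t) hw
      set St : Matrix.SpecialLinearGroup (Fin N) K :=
        ⟨1 + t • vecMulVec u w, det_transvec u w t hw⟩ with hSt
      set St' : Matrix.SpecialLinearGroup (Fin N) K :=
        ⟨1 - t • vecMulVec u w, hdet2⟩ with hSt'
      have hprod : St * St' = 1 := by
        apply Subtype.ext
        show (1 + t • vecMulVec u w) * (1 - t • vecMulVec u w) = 1
        have hE2 : vecMulVec u w * vecMulVec u w = 0 := by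
          rw [vmv_mul_vmv, hw, zero_smul]
        simp only [mul_sub, add_mul, mul_one, one_mul, smul_mul_assoc, mul_smul_comm,
          smul_smul, hE2, smul_zero, add_zero, sub_zero]
        abel
      have hADJ : ((St : Matrix (Fin N) (Fin N) K)).adjugate = 1 - t • vecMulVec u w := by
        rw [← Matrix.SpecialLinearGroup.coe_inv, inv_eq_of_mul_eq_one_right hprod]
      have h0 := hconjSL St
      rw [hADJ] at h0
      exact h0
    obtain ⟨c, hc⟩ := scalar_of_transvection_comm hN (m a) htrans
    exact hscalar_center a c hc
  -- an element whose conjugate-commutators are central is central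
  have key3 : ∀ a : G, (∀ g : G, ⁅a, g * a * g⁻¹⁆ ∈ Subgroup.center G) →
      a ∈ Subgroup.center G := by
    intro a h
    apply key2
    intro g
    set z := ⁅a, g * a * g⁻¹⁆ with hzdef
    obtain ⟨c, hc⟩ := hcentral_scalar z (h g)
    have hφ : Matrix.GeneralLinearGroup.det (ι z) = 1 := by
      rw [hzdef, ← MonoidHom.comp_apply (Matrix.GeneralLinearGroup.det) ι,
        map_commutatorElement]
      exact commutatorElement_eq_one_iff_mul_comm.mpr (mul_comm _ _)
    have hdet : (m z).det = 1 := by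
      have := congrArg Units.val hφ
      exact this
    have hcN : c ^ N = 1 := by
      rw [hc, Matrix.det_smul, Matrix.det_one, mul_one, Fintype.card_fin] at hdet
      exact hdet
    have hzN : z ^ N = 1 := by
      apply hminj
      have : m (z ^ N) = (m z) ^ N := by
        simp only [hm, map_pow, Units.val_pow_eq_pow_val]
      rw [this, hm1, hc, smul_pow, one_pow, hcN, one_smul]
    have hz1 : z = 1 := by
      by_contra hne
      exact htf z hne (isOfFinOrder_iff_pow_eq_one.mpr ⟨N, hN, hzN⟩)
    exact commutatorElement_eq_one_iff_mul_comm.mp hz1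
  -- main statement for nilpotent normal subgroups
  have main : ∀ H : Subgroup G, H.Normal → Group.IsNilpotent ↥H → H ≤ Subgroup.center G := by
    intro H hHnorm hHnilp
    obtain ⟨n, hn⟩ := nilpotent_iff_lowerCentralSeries.mp hHnilp
    set L : ℕ → Subgroup G := fun k => (Subgroup.lowerCentralSeries (⊤ : Subgroup ↥H) k).map H.subtype with hL
    have hLconj : ∀ (k : ℕ) (g x : G), x ∈ L k → g * x * g⁻¹ ∈ L k := by
      intro k g x hx
      obtain ⟨y, hy, rfl⟩ := hx
      let f : ↥H →* ↥H :=
        { toFun := fun h => ⟨g * ↑h * g⁻¹, hHnorm.conj_mem ↑h h.2 g⟩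
          map_one' := by ext; simp
          map_mul' := fun a b => by ext; simp }
      have hf : f y ∈ Subgroup.lowerCentralSeries (⊤ : Subgroup ↥H) k :=
        lowerCentralSeries.map f k ⟨y, hy, rfl⟩
      exact ⟨f y, hf, rfl⟩
    have hLcomm : ∀ (k : ℕ) (x y : G), x ∈ L k → y ∈ L k → ⁅x, y⁆ ∈ L (k + 1) := by
      intro k x y hx hy
      obtain ⟨x', hx', rfl⟩ := hx
      obtain ⟨y', hy', rfl⟩ := hy
      refine ⟨⁅x', y'⁆, ?_, by rw [map_commutatorElement]⟩
      rw [lowerCentralSeries_succ]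
      exact Subgroup.commutator_mem_commutator hx' (Subgroup.mem_top y')
    have hstep : ∀ k : ℕ, L (k + 1) ≤ Subgroup.center G → L k ≤ Subgroup.center G := by
      intro k hk x hx
      apply key3
      intro g
      exact hk (hLcomm k x (g * x * g⁻¹) hx (hLconj k g x hx))
    have hdown : ∀ i : ℕ, L (n - i) ≤ Subgroup.center G := by
      intro i
      induction i with
      | zero =>
        have : L n = ⊥ := by rw [hL]; simp only [hn, Subgroup.map_bot]
        rw [Nat.sub_zero, this]
        exact bot_le
      | succ i ih =>
        rcases Nat.lt_or_ge i n with hlt | hge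
        · have heq : n - i = (n - (i + 1)) + 1 := by omega
          rw [heq] at ih
          exact hstep _ ih
        · have heq : n - (i + 1) = n - i := by omega
          rw [heq]
          exact ih
    have hL0 := hdown n
    rw [Nat.sub_self] at hL0
    intro x hx
    exact hL0 ⟨⟨x, hx⟩, by rw [lowerCentralSeries_zero]; trivial, rfl⟩
  refine ⟨main, le_antisymm (iSup_le fun H => iSup_le fun hH => main H hH.1 hH.2) ?_⟩
  have hcn : (Subgroup.center G).Normal := by
    constructor
    intro z hz g
    have hzg : g * z = z * g := Subgroup.mem_center_iff.mp hz g
    have : g * z * g⁻¹ = z := by rw [hzg, mul_assoc, mul_inv_cancel, mul_one]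
    rw [this]
    exact hz
  have hcnil : Group.IsNilpotent ↥(Subgroup.center G) := by
    letI : CommGroup ↥(Subgroup.center G) := { (inferInstance : Group ↥(Subgroup.center G)) with
      mul_comm := fun a b => Subtype.ext (Subgroup.mem_center_iff.mp b.2 a) }
    exact CommGroup.isNilpotent
  exact le_iSup_of_le (Subgroup.center G) (le_iSup_of_le ⟨hcn, hcnil⟩ le_rfl)
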